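/- Let k ≥ 1 be an integer and let T be a finite rooted tree with n ≥ 1 vertices in which every vertex has exactly 0 or 2 children. Then there exists a labeling λ : V → Σ_k such that (i) for every vertex v with children u_1, u_2, the configuration (λ(v) : λ(u_1), λ(u_2)) is in C_k, and (ii) for every 1 ≤ i ≤ k, every connected component of the set λ^{−1}({a_i, b_i}) has cardinality at most n^{1/k} (as a real-number bound). -/
import Mathlib


open Function

/-- The labels `a_i`, `b_i`, `x_i` used by the problems `Π_k`. -/
inductive Lab : Type where
  | a : ℕ → Lab
  | b : ℕ → Lab
  | x : ℕ → Lab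
deriving DecidableEq

/-- The label set `Σ_k = {a_1, b_1, x_1, a_2, b_2, x_2, …, x_{k−1}, a_k, b_k}`. -/
def SigmaK (k : ℕ) : Set Lab :=
  {ℓ | ∃ i, 1 ≤ i ∧ ((i ≤ k ∧ (ℓ = Lab.a i ∨ ℓ = Lab.b i)) ∨ (i ≤ k - 1 ∧ ℓ = Lab.x i))}

/-- The labels `{a_1, b_1, x_1, …, a_{i−1}, b_{i−1}, x_{i−1}}` (strictly below level `i`). -/
def belowStrict (i : ℕ) : Set Lab :=
  {ℓ | ∃ j, 1 ≤ j ∧ j < i ∧ (ℓ = Lab.a j ∨ ℓ = Lab.b j ∨ ℓ = Lab.x j)}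

/-- The labels `{a_1, b_1, x_1, …, x_{i−1}, a_i, b_i}`. -/
def upTo (i : ℕ) : Set Lab :=
  belowStrict i ∪ {Lab.a i, Lab.b i}

/-- The configurations `C_k` of the problem `Π_k = (2, Σ_k, C_k)`, closed under
swapping the two child labels. -/
def Ck (k : ℕ) : Set (Lab × Lab × Lab) :=
  {t | (∃ i, 1 ≤ i ∧ i ≤ k ∧
          ((t.1 = Lab.a i ∧ t.2.1 ∈ belowStrict i ∪ {Lab.b i} ∧
              t.2.2 ∈ belowStrict i ∪ {Lab.b i}) ∨
           (t.1 = Lab.b i ∧ t.2.1 ∈ belowStrict i ∪ {Lab.a i} ∧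
              t.2.2 ∈ belowStrict i ∪ {Lab.a i}))) ∨
       (∃ i, 1 ≤ i ∧ i ≤ k - 1 ∧ t.1 = Lab.x i ∧
          ((t.2.1 ∈ SigmaK k ∧ t.2.2 ∈ upTo i) ∨
           (t.2.2 ∈ SigmaK k ∧ t.2.1 ∈ upTo i)))}

/-- Adjacency (parent/child relation) restricted to the subset `S`: connected
components of `S` are taken w.r.t. this relation. -/
def adjOn {V : Type*} (par : V → V) (S : Set V) (u v : V) : Prop :=
  u ∈ S ∧ v ∈ S ∧ u ≠ v ∧ (par u = v ∨ par v = u)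

namespace Stmt12
open scoped Classical

variable {V : Type*} [Fintype V]

/-- descendants of `v` within `S`: vertices whose parent-chain to `v` stays in `S`. -/
noncomputable def desc (par : V → V) (S : Finset V) (v : V) : Finset V :=
  Finset.univ.filter (fun u => ∃ m, par^[m] u = v ∧ ∀ j ≤ m, par^[j] u ∈ S)

variable {par : V → V} {S : Finset V} {r : V}

lemma mem_desc {u v : V} :
    u ∈ desc par S v ↔ ∃ m, par^[m] u = v ∧ ∀ j ≤ m, par^[j] u ∈ S := by
  simp [desc]

lemma mem_S_of_mem_desc {u v : V} (h : u ∈ desc par S v) : u ∈ S := by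
  obtain ⟨m, -, hc⟩ := mem_desc.1 h
  simpa using hc 0 (Nat.zero_le m)

lemma target_mem_S {u v : V} (h : u ∈ desc par S v) : v ∈ S := by
  obtain ⟨m, he, hc⟩ := mem_desc.1 h
  have := hc m le_rfl; rwa [he] at this

lemma self_mem_desc {v : V} (hv : v ∈ S) : v ∈ desc par S v :=
  mem_desc.2 ⟨0, rfl, by intro j hj; interval_cases j; simpa⟩

lemma desc_trans {u w v : V} (h1 : u ∈ desc par S w) (h2 : w ∈ desc par S v) :
    u ∈ desc par S v := by
  obtain ⟨m1, he1, hc1⟩ := mem_desc.1 h1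
  obtain ⟨m2, he2, hc2⟩ := mem_desc.1 h2
  refine mem_desc.2 ⟨m1 + m2, ?_, ?_⟩
  · rw [add_comm, Function.iterate_add_apply, he1, he2]
  · intro j hj
    rcases le_or_gt j m1 with h | h
    · exact hc1 j h
    · have : par^[j] u = par^[j - m1] w := by
        rw [← he1, ← Function.iterate_add_apply]
        congr 1; omega
      rw [this]; exact hc2 _ (by omega)

lemma desc_subset_desc {w v : V} (h : w ∈ desc par S v) : desc par S w ⊆ desc par S v :=
  fun _ hu => desc_trans hu h

lemma child_mem_desc {c v : V} (hc : c ∈ S) (hv : v ∈ S) (hpar : par c = v) :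
    c ∈ desc par S v := by
  refine mem_desc.2 ⟨1, by simpa using hpar, ?_⟩
  intro j hj; interval_cases j <;> simpa [hpar]

lemma desc_comparable {u v₁ v₂ : V} (h1 : u ∈ desc par S v₁) (h2 : u ∈ desc par S v₂) :
    v₁ ∈ desc par S v₂ ∨ v₂ ∈ desc par S v₁ := by
  obtain ⟨m1, he1, hc1⟩ := mem_desc.1 h1
  obtain ⟨m2, he2, hc2⟩ := mem_desc.1 h2
  rcases le_or_gt m1 m2 with h | h
  · left
    refine mem_desc.2 ⟨m2 - m1, ?_, ?_⟩
    · rw [← he1, ← Function.iterate_add_apply]; rw [← he2]; congr 1; omega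
    · intro j hj
      have : par^[j] v₁ = par^[j + m1] u := by rw [← he1, ← Function.iterate_add_apply]
      rw [this]; exact hc2 _ (by omega)
  · right
    refine mem_desc.2 ⟨m1 - m2, ?_, ?_⟩
    · rw [← he2, ← Function.iterate_add_apply]; rw [← he1]; congr 1; omega
    · intro j hj
      have : par^[j] v₂ = par^[j + m2] u := by rw [← he2, ← Function.iterate_add_apply]
      rw [this]; exact hc1 _ (by omega)

/-! ### depth -/

noncomputable def dep (par : V → V) (r : V) (v : V) : ℕ := sInf {m | par^[m] v = r}

section Dep

set_option linter.unusedSectionVars false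

lemma dep_spec (hre : ∀ v : V, ∃ m : ℕ, par^[m] v = r) (v : V) : par^[dep par r v] v = r := Nat.sInf_mem (hre v)

lemma dep_le {v : V} {m : ℕ} (h : par^[m] v = r) : dep par r v ≤ m := Nat.sInf_le h

lemma dep_eq_zero_iff (hre : ∀ v : V, ∃ m : ℕ, par^[m] v = r) {v : V} : dep par r v = 0 ↔ v = r := by
  constructor
  · intro h; have := dep_spec hre v; rwa [h] at this
  · intro h; subst h; exact Nat.le_antisymm (dep_le rfl) (Nat.zero_le _)

lemma dep_parent (hre : ∀ v : V, ∃ m : ℕ, par^[m] v = r) {v : V} (hv : v ≠ r) : dep par r v = dep par r (par v) + 1 := by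
  have h1 : dep par r v ≤ dep par r (par v) + 1 := by
    apply dep_le
    rw [Function.iterate_succ_apply]
    exact dep_spec hre (par v)
  have h0 : dep par r v ≠ 0 := fun h => hv ((dep_eq_zero_iff hre).1 h)
  have h2 : dep par r (par v) ≤ dep par r v - 1 := by
    apply dep_le
    have := dep_spec hre v
    rwa [show dep par r v = (dep par r v - 1) + 1 by omega, Function.iterate_succ_apply] at this
  omega

lemma iterate_root (hroot : par r = r) (m : ℕ) : par^[m] r = r := Function.iterate_fixed hroot m

lemma dep_iterate (hroot : par r = r) (hre : ∀ v : V, ∃ m : ℕ, par^[m] v = r) : ∀ (m : ℕ) (u v : V), par^[m] u = v → v ≠ r → dep par r v + m = dep par r u := by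
  intro m
  induction m with
  | zero => intro u v h _; simp at h; subst h; rfl
  | succ t ih =>
    intro u v h hv
    have hu : u ≠ r := by
      intro h'; subst h'; rw [iterate_root hroot] at h; exact hv h.symm
    rw [Function.iterate_succ_apply] at h
    have := ih (par u) v h hv
    rw [dep_parent hre hu]
    omega

lemma dep_lt_of_desc (hroot : par r = r) (hre : ∀ v : V, ∃ m : ℕ, par^[m] v = r) {u v : V} (h : u ∈ desc par S v) (hne : u ≠ v) :
    dep par r v < dep par r u := by
  obtain ⟨m, he, -⟩ := mem_desc.1 h
  have hm : m ≠ 0 := by rintro rfl; simp at he; exact hne he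
  by_cases hv : v = r
  · have h0 : dep par r u ≠ 0 := fun h0 => (hne (((dep_eq_zero_iff hre).1 h0).trans hv.symm))
    have h1 : dep par r v = 0 := by rw [hv]; exact (dep_eq_zero_iff hre).2 rfl
    omega
  · have := dep_iterate hroot hre m u v he hv
    omega

lemma card_desc_lt (hroot : par r = r) (hre : ∀ v : V, ∃ m : ℕ, par^[m] v = r) {u v : V} (h : u ∈ desc par S v) (hne : u ≠ v) :
    (desc par S u).card < (desc par S v).card := by
  apply Finset.card_lt_card
  constructor
  · exact desc_subset_desc h
  · intro hsub
    have hv : v ∈ desc par S u := hsub (self_mem_desc (target_mem_S h))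
    have h1 := dep_lt_of_desc hroot hre h hne
    have h2 := dep_lt_of_desc hroot hre hv (Ne.symm hne)
    omega

end Dep

/-! ### heavy vertices, branchings, and the counting lemma -/

def heavy (α : ℝ) (par : V → V) (S : Finset V) (v : V) : Prop :=
  α < ((desc par S v).card : ℝ)

noncomputable def nextT (α : ℝ) (par : V → V) (S : Finset V) : Finset V :=
  S.filter (fun v => ∃ c₁ c₂ : V, c₁ ≠ c₂ ∧ (c₁ ≠ v ∧ par c₁ = v ∧ heavy α par S c₁) ∧
    (c₂ ≠ v ∧ par c₂ = v ∧ heavy α par S c₂))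

section Heavy
variable {α : ℝ}

set_option linter.unusedSectionVars false

lemma heavy_mem (hα : 0 ≤ α) {v : V} (h : heavy α par S v) : v ∈ S := by
  have : 0 < (desc par S v).card := by
    have := h; unfold heavy at this
    exact_mod_cast lt_of_le_of_lt hα this
  obtain ⟨u, hu⟩ := Finset.card_pos.1 this
  exact target_mem_S hu

lemma heavy_of_desc_subset {u v : V} (h : u ∈ desc par S v) (hu : heavy α par S u) :
    heavy α par S v := by
  unfold heavy at *
  have := Finset.card_le_card (desc_subset_desc h)
  calc α < _ := hu
    _ ≤ _ := by exact_mod_cast this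

lemma nextT_subset : nextT α par S ⊆ S := Finset.filter_subset _ _

/-- from a strict descendant, find a child of `v` above it -/
lemma desc_step {w v : V} (h : w ∈ desc par S v) (hne : w ≠ v) :
    ∃ z, z ≠ v ∧ par z = v ∧ z ∈ S ∧ w ∈ desc par S z := by
  obtain ⟨m, he, hc⟩ := mem_desc.1 h
  clear h
  induction m using Nat.strong_induction_on generalizing v with
  | _ m ih =>
    match m, he with
    | 0, he => exact absurd he hne
    | (t+1), he =>
      have hyS : par^[t] w ∈ S := hc t (by omega)
      by_cases hy : par^[t] w = v
      · exact ih t (by omega) hne hy (fun j hj => hc j (by omega))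
      · refine ⟨par^[t] w, hy, ?_, hyS, ?_⟩
        · rw [← Function.iterate_succ_apply' par t w]; exact he
        · exact mem_desc.2 ⟨t, rfl, fun j hj => hc j (by omega)⟩


noncomputable def mufuel (α : ℝ) (par : V → V) (S : Finset V) : ℕ → V → V
  | 0, v => v
  | (f+1), v =>
    if h : ∃ c, c ≠ v ∧ par c = v ∧ heavy α par S c then
      mufuel α par S f (Classical.choose h) else v

noncomputable def mu (α : ℝ) (par : V → V) (S : Finset V) (v : V) : V :=
  mufuel α par S (Fintype.card V) v

variable (hα : 0 ≤ α) (hroot : par r = r) (hre : ∀ v : V, ∃ m : ℕ, par^[m] v = r)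

include hα in
lemma card_desc_pos {v : V} (hv : heavy α par S v) : 0 < (desc par S v).card := by
  have := hv; unfold heavy at this
  exact_mod_cast lt_of_le_of_lt hα this

include hα hroot hre in
lemma heavy_child_mem {c v : V} (hv : heavy α par S v) (hc : c ≠ v ∧ par c = v ∧ heavy α par S c) :
    c ∈ desc par S v ∧ (desc par S c).card < (desc par S v).card := by
  have h1 : c ∈ desc par S v :=
    child_mem_desc (heavy_mem hα hc.2.2) (heavy_mem hα hv) hc.2.1
  exact ⟨h1, card_desc_lt hroot hre h1 hc.1⟩

include hα hroot hre in
lemma mufuel_spec : ∀ (f : ℕ) (v : V), heavy α par S v → (desc par S v).card ≤ f →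
    mufuel α par S f v ∈ desc par S v ∧ heavy α par S (mufuel α par S f v) ∧
      ¬∃ c, c ≠ mufuel α par S f v ∧ par c = mufuel α par S f v ∧ heavy α par S c := by
  intro f
  induction f with
  | zero => intro v hv hc; exact absurd hc (by have := card_desc_pos hα hv; omega)
  | succ f ih =>
    intro v hv hcard
    by_cases h : ∃ c, c ≠ v ∧ par c = v ∧ heavy α par S c
    · have hspec := Classical.choose_spec h
      obtain ⟨hmem, hlt⟩ := heavy_child_mem hα hroot hre hv hspec
      have := ih (Classical.choose h) hspec.2.2 (by omega)
      rw [show mufuel α par S (f+1) v = mufuel α par S f (Classical.choose h) by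
        simp [mufuel, dif_pos h]]
      exact ⟨desc_trans this.1 hmem, this.2⟩
    · rw [show mufuel α par S (f+1) v = v by simp [mufuel, dif_neg h]]
      exact ⟨self_mem_desc (heavy_mem hα hv), hv, h⟩

include hα hroot hre in
lemma mufuel_stab : ∀ (f : ℕ) (v : V), heavy α par S v → (desc par S v).card ≤ f →
    ∀ g, f ≤ g → mufuel α par S g v = mufuel α par S f v := by
  intro f
  induction f with
  | zero => intro v hv hc; exact absurd hc (by have := card_desc_pos hα hv; omega)
  | succ f ih =>
    intro v hv hcard g hg
    obtain ⟨g', rfl⟩ : ∃ g', g = g' + 1 := ⟨g - 1, by omega⟩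
    by_cases h : ∃ c, c ≠ v ∧ par c = v ∧ heavy α par S c
    · have hspec := Classical.choose_spec h
      obtain ⟨hmem, hlt⟩ := heavy_child_mem hα hroot hre hv hspec
      rw [show mufuel α par S (f+1) v = mufuel α par S f (Classical.choose h) by
        simp [mufuel, dif_pos h]]
      rw [show mufuel α par S (g'+1) v = mufuel α par S g' (Classical.choose h) by
        simp [mufuel, dif_pos h]]
      exact ih (Classical.choose h) hspec.2.2 (by omega) g' (by omega)
    · rw [show mufuel α par S (f+1) v = v by simp [mufuel, dif_neg h]]
      rw [show mufuel α par S (g'+1) v = v by simp [mufuel, dif_neg h]]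

lemma card_desc_le_univ (v : V) : (desc par S v).card ≤ Fintype.card V := by
  simpa using Finset.card_le_card (Finset.subset_univ (desc par S v))

include hα hroot hre in
lemma mu_spec {v : V} (hv : heavy α par S v) :
    mu α par S v ∈ desc par S v ∧ heavy α par S (mu α par S v) ∧
      ¬∃ c, c ≠ mu α par S v ∧ par c = mu α par S v ∧ heavy α par S c := by
  have h1 : mu α par S v = mufuel α par S ((desc par S v).card) v :=
    mufuel_stab hα hroot hre _ v hv le_rfl _ (card_desc_le_univ v)
  rw [h1]; exact mufuel_spec hα hroot hre _ v hv le_rfl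

include hα hroot hre in
lemma mu_step {v : V} (hv : heavy α par S v)
    (h : ∃ c, c ≠ v ∧ par c = v ∧ heavy α par S c) :
    mu α par S v = mu α par S (Classical.choose h) := by
  have hspec := Classical.choose_spec h
  obtain ⟨hmem, hlt⟩ := heavy_child_mem hα hroot hre hv hspec
  have hcv : 0 < Fintype.card V := Fintype.card_pos_iff.2 ⟨v⟩
  obtain ⟨t, ht⟩ : ∃ t, Fintype.card V = t + 1 := ⟨Fintype.card V - 1, by omega⟩
  have h1 : mu α par S v = mufuel α par S t (Classical.choose h) := by
    rw [mu, ht]; simp [mufuel, dif_pos h]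
  rw [h1, mu]
  have hle := card_desc_le_univ (S := S) (par := par) v
  exact (mufuel_stab hα hroot hre ((desc par S (Classical.choose h)).card) _ hspec.2.2 le_rfl t
    (by omega)).symm ▸ (mufuel_stab hα hroot hre _ _ hspec.2.2 le_rfl (Fintype.card V) (by omega)).symm ▸ rfl


lemma parent_mem_desc {w v : V} (h : w ∈ desc par S v) (hne : w ≠ v) :
    par w ∈ desc par S v := by
  obtain ⟨m, he, hc⟩ := mem_desc.1 h
  have hm : m ≠ 0 := by rintro rfl; simp at he; exact hne he
  refine mem_desc.2 ⟨m - 1, ?_, ?_⟩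
  · have h1 : par^[m - 1 + 1] w = v := by rw [show m - 1 + 1 = m by omega]; exact he
    rw [Function.iterate_succ_apply] at h1; exact h1
  · intro j hj
    have h2 : par^[j + 1] w ∈ S := hc (j+1) (by omega)
    rw [Function.iterate_succ_apply] at h2; exact h2

include hα hroot hre in
lemma dep_child {c v : V} (hc : c ≠ v) (hp : par c = v) : dep par r c = dep par r v + 1 := by
  have hcr : c ≠ r := by rintro rfl; rw [hroot] at hp; exact hc hp
  rw [dep_parent hre hcr, hp]

include hα hroot hre in
lemma mu_chain : ∀ (N : ℕ) (v w : V), (desc par S v).card ≤ N → heavy α par S v →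
    heavy α par S w → w ∈ desc par S v → mu α par S v ∈ desc par S w →
    mu α par S w = mu α par S v := by
  intro N
  induction N with
  | zero => intro v w hcard hv; exact absurd hcard (by have := card_desc_pos hα hv; omega)
  | succ N ih =>
    intro v w hcard hv hw hwv hmuv
    by_cases hvw : w = v
    · subst hvw; rfl
    · obtain ⟨z, hz1, hz2, hz3, hz4⟩ := desc_step hwv hvw
      have hzh : heavy α par S z := heavy_of_desc_subset hz4 hw
      have h : ∃ c, c ≠ v ∧ par c = v ∧ heavy α par S c := ⟨z, hz1, hz2, hzh⟩
      have hspec := Classical.choose_spec h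
      have hmm : mu α par S v = mu α par S (Classical.choose h) := mu_step hα hroot hre hv h
      obtain ⟨hmem, hlt⟩ := heavy_child_mem hα hroot hre hv hspec
      have hmuc : mu α par S (Classical.choose h) ∈ desc par S (Classical.choose h) :=
        (mu_spec hα hroot hre hspec.2.2).1
      have hm2 : mu α par S (Classical.choose h) ∈ desc par S w := by rw [← hmm]; exact hmuv
      rcases desc_comparable hm2 hmuc with hcase | hcase
      · rw [hmm]
        exact ih (Classical.choose h) w (by omega) hspec.2.2 hw hcase hm2
      · by_cases hcw : Classical.choose h = w
        · rw [hmm, hcw]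
        · exfalso
          have h1 : dep par r w < dep par r (Classical.choose h) :=
            dep_lt_of_desc hroot hre hcase hcw
          have h2 : dep par r v < dep par r w := dep_lt_of_desc hroot hre hwv hvw
          have h3 : dep par r (Classical.choose h) = dep par r v + 1 :=
            dep_child hα hroot hre hspec.1 hspec.2.1
          omega

include hα hroot hre in
lemma children_desc_disjoint {c₁ c₂ v : V} (h1 : c₁ ≠ v ∧ par c₁ = v ∧ c₁ ∈ S)
    (h2 : c₂ ≠ v ∧ par c₂ = v ∧ c₂ ∈ S) (hne : c₁ ≠ c₂) {x : V}
    (hx1 : x ∈ desc par S c₁) (hx2 : x ∈ desc par S c₂) : False := by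
  have hd1 : dep par r c₁ = dep par r v + 1 := dep_child hα hroot hre h1.1 h1.2.1
  have hd2 : dep par r c₂ = dep par r v + 1 := dep_child hα hroot hre h2.1 h2.2.1
  rcases desc_comparable hx1 hx2 with h | h
  · have := dep_lt_of_desc hroot hre h hne; omega
  · have := dep_lt_of_desc hroot hre h (Ne.symm hne); omega

/-- the injection from heavy-branchings to minimal heavy vertices -/
noncomputable def phi (α : ℝ) (par : V → V) (S : Finset V) (b : V) : V :=
  if hb : ∃ c₁ c₂ : V, c₁ ≠ c₂ ∧ (c₁ ≠ b ∧ par c₁ = b ∧ heavy α par S c₁) ∧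
      (c₂ ≠ b ∧ par c₂ = b ∧ heavy α par S c₂) then
    (if mu α par S (Classical.choose hb) = mu α par S b then
      mu α par S (Classical.choose (Classical.choose_spec hb)) else
      mu α par S (Classical.choose hb))
  else b

include hα hroot hre in
lemma phi_spec {b : V} (hb : b ∈ nextT α par S) :
    ∃ d, d ≠ b ∧ par d = b ∧ heavy α par S d ∧ phi α par S b = mu α par S d ∧
      phi α par S b ≠ mu α par S b := by
  rw [nextT, Finset.mem_filter] at hb
  obtain ⟨hbS, hex⟩ := hb
  set c₁ := Classical.choose hex with hc1
  have hex2 := Classical.choose_spec hex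
  set c₂ := Classical.choose hex2 with hc2
  have hspec := Classical.choose_spec hex2
  obtain ⟨hne, ⟨hb1, hp1, hh1⟩, ⟨hb2, hp2, hh2⟩⟩ := hspec
  have hmu1 : mu α par S c₁ ∈ desc par S c₁ := (mu_spec hα hroot hre hh1).1
  have hmu2 : mu α par S c₂ ∈ desc par S c₂ := (mu_spec hα hroot hre hh2).1
  have hmune : mu α par S c₁ ≠ mu α par S c₂ := by
    intro he
    exact children_desc_disjoint hα hroot hre ⟨hb1, hp1, heavy_mem hα hh1⟩
      ⟨hb2, hp2, heavy_mem hα hh2⟩ hne hmu1 (he ▸ hmu2)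
  rw [phi, dif_pos hex]
  by_cases hcase : mu α par S c₁ = mu α par S b
  · rw [if_pos hcase]
    exact ⟨c₂, hb2, hp2, hh2, rfl, fun h => hmune (hcase.trans h.symm)⟩
  · rw [if_neg hcase]
    exact ⟨c₁, hb1, hp1, hh1, rfl, hcase⟩


include hα hroot hre in
lemma minimal_disjoint {m₁ m₂ : V}
    (h1 : heavy α par S m₁ ∧ ¬∃ c, c ≠ m₁ ∧ par c = m₁ ∧ heavy α par S c)
    (h2 : heavy α par S m₂ ∧ ¬∃ c, c ≠ m₂ ∧ par c = m₂ ∧ heavy α par S c)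
    (hne : m₁ ≠ m₂) : Disjoint (desc par S m₁) (desc par S m₂) := by
  rw [Finset.disjoint_left]
  intro x hx1 hx2
  have aux : ∀ a b : V, heavy α par S a → (¬∃ c, c ≠ b ∧ par c = b ∧ heavy α par S c) →
      a ∈ desc par S b → a ≠ b → False := by
    intro a b ha hb hab hne'
    obtain ⟨z, hz1, hz2, hz3, hz4⟩ := desc_step hab hne'
    exact hb ⟨z, hz1, hz2, heavy_of_desc_subset hz4 ha⟩
  rcases desc_comparable hx1 hx2 with h | h
  · exact aux m₁ m₂ h1.1 h2.2 h hne
  · exact aux m₂ m₁ h2.1 h1.2 h (Ne.symm hne)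

include hα hroot hre in
lemma count_lemma : ((nextT α par S).card : ℝ) * α ≤ (S.card : ℝ) := by
  classical
  set M := S.filter (fun v => heavy α par S v ∧ ¬∃ c, c ≠ v ∧ par c = v ∧ heavy α par S c)
    with hM
  have hmaps : ∀ b ∈ nextT α par S, phi α par S b ∈ M := by
    intro b hb
    obtain ⟨d, hd1, hd2, hd3, hd4, hd5⟩ := phi_spec hα hroot hre hb
    have hs := mu_spec hα hroot hre hd3
    rw [hd4, hM, Finset.mem_filter]
    exact ⟨heavy_mem hα hs.2.1, hs.2.1, hs.2.2⟩
  have key : ∀ b' ∈ nextT α par S, ∀ d d' : V,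
      par d' = b' → heavy α par S d → heavy α par S d' →
      mu α par S d' = mu α par S d → mu α par S d' ≠ mu α par S b' →
      d' ∈ desc par S d → d ≠ d' → False := by
    intro b' hb' d d' hd2' hd3 hd3' hmeq hmne hdd hne
    have hb'S : b' ∈ S := nextT_subset hb'
    have hd'S : d' ∈ S := heavy_mem hα hd3'
    have hb'd : b' ∈ desc par S d := by
      have := parent_mem_desc hdd (Ne.symm hne)
      rwa [hd2'] at this
    have hb'h : heavy α par S b' := heavy_of_desc_subset (child_mem_desc hd'S hb'S hd2') hd3'
    have hmub' : mu α par S d ∈ desc par S b' := by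
      have hx1 : mu α par S d' ∈ desc par S d' := (mu_spec hα hroot hre hd3').1
      have hx2 : d' ∈ desc par S b' := child_mem_desc hd'S hb'S hd2'
      rw [← hmeq]
      exact desc_trans hx1 hx2
    have hfin := mu_chain hα hroot hre ((desc par S d).card) d b' le_rfl hd3 hb'h hb'd hmub'
    exact hmne (by rw [hmeq, ← hfin])
  have hinj : Set.InjOn (phi α par S) (nextT α par S) := by
    intro b hb b' hb' heq
    simp only [Finset.coe_sort_coe, Finset.mem_coe] at hb hb'
    obtain ⟨d, hd1, hd2, hd3, hd4, hd5⟩ := phi_spec hα hroot hre hb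
    obtain ⟨d', hd1', hd2', hd3', hd4', hd5'⟩ := phi_spec hα hroot hre hb'
    have hmeq : mu α par S d = mu α par S d' := by rw [← hd4, ← hd4', heq]
    by_cases hdd : d = d'
    · rw [← hd2, ← hd2', hdd]
    · have hx1 : mu α par S d ∈ desc par S d := (mu_spec hα hroot hre hd3).1
      have hx2 : mu α par S d ∈ desc par S d' := by rw [hmeq]; exact (mu_spec hα hroot hre hd3').1
      exfalso
      rcases desc_comparable hx2 hx1 with h | h
      · exact key b' hb' d d' hd2' hd3 hd3' hmeq.symm (by rw [← hd4']; exact hd5') h hdd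
      · exact key b hb d' d hd2 hd3' hd3 hmeq (by rw [← hd4]; exact hd5) h (Ne.symm hdd)
  have h1 : (nextT α par S).card ≤ M.card :=
    Finset.card_le_card_of_injOn _ hmaps hinj
  have hdisj : ∀ m₁ ∈ M, ∀ m₂ ∈ M, m₁ ≠ m₂ → Disjoint (desc par S m₁) (desc par S m₂) := by
    intro m₁ hm₁ m₂ hm₂ hne
    rw [hM, Finset.mem_filter] at hm₁ hm₂
    exact minimal_disjoint hα hroot hre hm₁.2 hm₂.2 hne
  have hsub : M.biUnion (desc par S) ⊆ S := by
    intro x hx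
    obtain ⟨m, hm, hxm⟩ := Finset.mem_biUnion.1 hx
    exact mem_S_of_mem_desc hxm
  have hcard : (M.biUnion (desc par S)).card = ∑ m ∈ M, (desc par S m).card :=
    Finset.card_biUnion hdisj
  have h2 : (M.card : ℝ) * α ≤ (S.card : ℝ) := by
    have e1 : (M.card : ℝ) * α = ∑ m ∈ M, α := by rw [Finset.sum_const, nsmul_eq_mul]
    have e2 : ∑ m ∈ M, α ≤ ∑ m ∈ M, ((desc par S m).card : ℝ) := by
      apply Finset.sum_le_sum
      intro m hm
      rw [hM, Finset.mem_filter] at hm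
      exact le_of_lt hm.2.1
    have e3 : ∑ m ∈ M, ((desc par S m).card : ℝ) = ((M.biUnion (desc par S)).card : ℝ) := by
      rw [hcard]; push_cast; rfl
    have e4 : ((M.biUnion (desc par S)).card : ℝ) ≤ (S.card : ℝ) := by
      exact_mod_cast Finset.card_le_card hsub
    linarith
  calc ((nextT α par S).card : ℝ) * α ≤ (M.card : ℝ) * α := by
        apply mul_le_mul_of_nonneg_right _ hα
        exact_mod_cast h1
    _ ≤ (S.card : ℝ) := h2

end Heavy

/-! ### the decomposition into levels -/

noncomputable def Tset (α : ℝ) (par : V → V) : ℕ → Finset V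
  | 0 => Finset.univ
  | (i+1) => nextT α par (Tset α par i)

variable {α : ℝ}

lemma Tset_succ_subset (i : ℕ) : Tset α par (i+1) ⊆ Tset α par i := nextT_subset

lemma Tset_anti {i j : ℕ} (h : i ≤ j) : Tset α par j ⊆ Tset α par i := by
  induction j with
  | zero => simp_all
  | succ j ih =>
    rcases Nat.lt_or_ge i (j+1) with h' | h'
    · exact (Tset_succ_subset j).trans (ih (by omega))
    · have : i = j + 1 := by omega
      subst this; exact subset_rfl

section Decomp
variable (hα : 0 ≤ α) (hroot : par r = r) (hre : ∀ v : V, ∃ m : ℕ, par^[m] v = r)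

include hα hroot hre in
lemma nextT_ssubset {S : Finset V} (hS : S.Nonempty) : nextT α par S ⊂ S := by
  obtain ⟨u, huS, hmax⟩ := Finset.exists_max_image S (dep par r) hS
  refine Finset.ssubset_iff_of_subset nextT_subset |>.2 ⟨u, huS, ?_⟩
  intro hu
  rw [nextT, Finset.mem_filter] at hu
  obtain ⟨-, c₁, c₂, hne, ⟨hc1, hp1, hh1⟩, -⟩ := hu
  have hc1S : c₁ ∈ S := heavy_mem hα hh1
  have := hmax c₁ hc1S
  have := dep_child hα hroot hre (r := r) hc1 hp1
  omega

include hα hroot hre in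
lemma Tset_vanish (v : V) : ∃ j : ℕ, v ∉ Tset α par j := by
  have main : ∀ i : ℕ, Tset α par i = ∅ ∨ (Tset α par i).card + i ≤ Fintype.card V := by
    intro i
    induction i with
    | zero => right; simp [Tset]
    | succ i ih =>
      rcases ih with h | h
      · left; rw [show Tset α par (i+1) = nextT α par (Tset α par i) from rfl, h]
        rfl
      · rcases Finset.eq_empty_or_nonempty (Tset α par i) with he | hne
        · left; rw [show Tset α par (i+1) = nextT α par (Tset α par i) from rfl, he]
          rfl
        · right
          have := Finset.card_lt_card (nextT_ssubset hα hroot hre hne)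
          rw [show Tset α par (i+1) = nextT α par (Tset α par i) from rfl]
          omega
  refine ⟨Fintype.card V + 1, ?_⟩
  rcases main (Fintype.card V + 1) with h | h
  · simp [h]
  · intro hv
    have := Finset.card_pos.2 ⟨v, hv⟩
    omega

end Decomp

noncomputable def dropN (α : ℝ) (par : V → V) (v : V) : ℕ := sInf {j | v ∉ Tset α par j}

noncomputable def clsF (α : ℝ) (par : V → V) (k : ℕ) (v : V) : ℕ :=
  min (k - 1) (dropN α par v - 1)

section Cls
variable (hα : 0 ≤ α) (hroot : par r = r) (hre : ∀ v : V, ∃ m : ℕ, par^[m] v = r)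

include hα hroot hre in
lemma dropN_spec (v : V) : v ∉ Tset α par (dropN α par v) :=
  Nat.sInf_mem (Tset_vanish hα hroot hre v)

include hα hroot hre in
lemma mem_Tset_iff {v : V} {j : ℕ} : v ∈ Tset α par j ↔ j < dropN α par v := by
  constructor
  · intro h
    by_contra h'
    exact (dropN_spec hα hroot hre v) (Tset_anti (by omega) h)
  · intro h
    by_contra h'
    have : dropN α par v ≤ j := by rw [dropN]; exact Nat.sInf_le h'
    omega

include hα hroot hre in
lemma dropN_pos (v : V) : 0 < dropN α par v :=
  (mem_Tset_iff hα hroot hre).1 (by simp [Tset])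

include hα hroot hre in
lemma mem_cls (k : ℕ) (v : V) : v ∈ Tset α par (clsF α par k v) := by
  have := dropN_pos hα hroot hre v
  refine (mem_Tset_iff hα hroot hre).2 ?_
  have : clsF α par k v ≤ dropN α par v - 1 := min_le_right _ _
  omega

lemma cls_le (k : ℕ) (v : V) : clsF α par k v ≤ k - 1 := min_le_left _ _

include hα hroot hre in
lemma not_mem_cls_succ {k : ℕ} {v : V} (h : clsF α par k v ≠ k - 1) :
    v ∉ Tset α par (clsF α par k v + 1) := by
  have h1 : clsF α par k v = dropN α par v - 1 := by
    rcases min_cases (k-1) (dropN α par v - 1) with ⟨h2, h3⟩ | ⟨h2, h3⟩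
    · exact absurd (by rw [clsF, h2]) h
    · rw [clsF, h2]
  have h2 := dropN_pos hα hroot hre v
  intro hmem
  have := (mem_Tset_iff hα hroot hre).1 hmem
  omega

include hα hroot hre in
lemma cls_ge_of_mem {k j : ℕ} {v : V} (h : v ∈ Tset α par j) (hj : j ≤ k - 1) :
    j ≤ clsF α par k v := by
  have := (mem_Tset_iff hα hroot hre).1 h
  refine le_min hj (by omega)

lemma cls_lt_of_not_mem {k j : ℕ} {v : V} (h : v ∉ Tset α par j) :
    clsF α par k v < j := by
  have h1 : j ≠ 0 := by rintro rfl; exact h (by simp [Tset])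
  have h2 : dropN α par v ≤ j := by rw [dropN]; exact Nat.sInf_le h
  have h3 : clsF α par k v ≤ dropN α par v - 1 := min_le_right _ _
  omega

end Cls

/-! ### the labeling -/

noncomputable def labF (α : ℝ) (par : V → V) (r : V) (k : ℕ) (v : V) : Lab :=
  if clsF α par k v ≠ k - 1 ∧ heavy α par (Tset α par (clsF α par k v)) v then
    Lab.x (clsF α par k v + 1)
  else if Even (dep par r v) then Lab.a (clsF α par k v + 1)
  else Lab.b (clsF α par k v + 1)

lemma labF_ab_inv {k : ℕ} {v : V} {i : ℕ}
    (h : labF α par r k v = Lab.a i ∨ labF α par r k v = Lab.b i) :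
    i = clsF α par k v + 1 ∧
      (clsF α par k v = k - 1 ∨ ¬ heavy α par (Tset α par (clsF α par k v)) v) := by
  simp only [labF] at h
  rcases h with h | h
  · split_ifs at h with h1 h2
    rw [not_and_or, not_not] at h1
    simp only [Lab.a.injEq] at h
    exact ⟨h.symm, h1⟩
  · split_ifs at h with h1 h2
    rw [not_and_or, not_not] at h1
    simp only [Lab.b.injEq] at h
    exact ⟨h.symm, h1⟩

lemma labF_x_inv {k : ℕ} {v : V} {i : ℕ} (h : labF α par r k v = Lab.x i) :
    i = clsF α par k v + 1 ∧ clsF α par k v ≠ k - 1 ∧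
      heavy α par (Tset α par (clsF α par k v)) v := by
  simp only [labF] at h
  split_ifs at h with h1 h2
  simp only [Lab.x.injEq] at h
  exact ⟨h.symm, h1⟩

lemma labF_cases (k : ℕ) (v : V) :
    (labF α par r k v = Lab.x (clsF α par k v + 1) ∧ clsF α par k v ≠ k - 1 ∧
        heavy α par (Tset α par (clsF α par k v)) v) ∨
    ((labF α par r k v = Lab.a (clsF α par k v + 1) ∨
        labF α par r k v = Lab.b (clsF α par k v + 1)) ∧
      (clsF α par k v = k - 1 ∨ ¬ heavy α par (Tset α par (clsF α par k v)) v)) := by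
  simp only [labF]
  split_ifs with h1 h2
  · exact Or.inl ⟨rfl, h1⟩
  · rw [not_and_or, not_not] at h1
    exact Or.inr ⟨Or.inl rfl, h1⟩
  · rw [not_and_or, not_not] at h1
    exact Or.inr ⟨Or.inr rfl, h1⟩


/-! ### tops of a/b components -/

noncomputable def tnF (par : V → V) (r : V) (Q : V → Prop) (u : V) : ℕ :=
  sInf {m | m = dep par r u ∨ ¬ Q (par^[m+1] u)}

noncomputable def topF (par : V → V) (r : V) (Q : V → Prop) (u : V) : V :=
  par^[tnF par r Q u] u

section Top
variable {Q : V → Prop}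

set_option linter.unusedSectionVars false in
lemma tn_spec (u : V) :
    tnF par r Q u = dep par r u ∨ ¬ Q (par^[tnF par r Q u + 1] u) := by
  have h : {m : ℕ | m = dep par r u ∨ ¬ Q (par^[m+1] u)}.Nonempty := ⟨dep par r u, Or.inl rfl⟩
  exact Nat.sInf_mem h

set_option linter.unusedSectionVars false in
lemma tn_le (u : V) : tnF par r Q u ≤ dep par r u := Nat.sInf_le (Or.inl rfl)

set_option linter.unusedSectionVars false in
lemma tn_min {u : V} {m : ℕ} (h : m < tnF par r Q u) :
    m ≠ dep par r u ∧ Q (par^[m+1] u) := by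
  have h2 := Nat.notMem_of_lt_sInf
    (s := {m : ℕ | m = dep par r u ∨ ¬ Q (par^[m+1] u)}) h
  simp only [Set.mem_setOf_eq, not_or, not_not] at h2
  exact h2

lemma top_chain {u : V} (hQ : Q u) : ∀ j ≤ tnF par r Q u, Q (par^[j] u) := by
  intro j hj
  match j with
  | 0 => simpa using hQ
  | (m+1) => exact (tn_min (r := r) (by omega)).2

lemma top_Q {u : V} (hQ : Q u) : Q (topF par r Q u) := top_chain hQ _ le_rfl

lemma top_step (hroot : par r = r) (hre : ∀ v : V, ∃ m : ℕ, par^[m] v = r)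
    {w u : V} (hp : par w = u) (hne : w ≠ u) (hQw : Q w) (hQu : Q u) :
    topF par r Q w = topF par r Q u := by
  have hwr : w ≠ r := by
    intro hw
    apply hne
    rw [hw] at hp ⊢
    rw [← hp, hroot]
  have hdw : dep par r w = dep par r u + 1 := by rw [dep_parent hre hwr, hp]
  have hiter : ∀ m, par^[m+1] w = par^[m] u := by
    intro m; rw [Function.iterate_succ_apply, hp]
  have ha : tnF par r Q w ≤ tnF par r Q u + 1 := by
    apply Nat.sInf_le
    rcases tn_spec (par := par) (Q := Q) (r := r) u with h | h
    · left; rw [hdw, h]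
    · right; rw [hiter (tnF par r Q u + 1)]; exact h
  have hb : ¬ (tnF par r Q w < tnF par r Q u + 1) := by
    intro hlt
    rcases tn_spec (par := par) (Q := Q) (r := r) w with h | h
    · have h2 := tn_le (par := par) (Q := Q) (r := r) u
      omega
    · exact h ((hiter _).symm ▸ top_chain (par := par) (r := r) hQu _ (by omega))
  have he : tnF par r Q w = tnF par r Q u + 1 := by omega
  rw [topF, topF, he, hiter]

end Top

/-! ### cardinality bound for levels -/

section CardBound
variable {α : ℝ} (hα : 0 ≤ α) (hroot : par r = r) (hre : ∀ v : V, ∃ m : ℕ, par^[m] v = r)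

include hα hroot hre in
lemma Tset_card_bound :
    ∀ i, ((Tset α par i).card : ℝ) * α ^ i ≤ (Fintype.card V : ℝ) := by
  intro i
  induction i with
  | zero => simp [Tset]
  | succ i ih =>
    have hc := count_lemma hα hroot hre (S := Tset α par i)
    have hpow : (0:ℝ) ≤ α ^ i := pow_nonneg hα i
    calc ((Tset α par (i+1)).card : ℝ) * α ^ (i+1)
        = (((nextT α par (Tset α par i)).card : ℝ) * α) * α ^ i := by
          rw [show Tset α par (i+1) = nextT α par (Tset α par i) from rfl, pow_succ]; ring
      _ ≤ ((Tset α par i).card : ℝ) * α ^ i := mul_le_mul_of_nonneg_right hc hpow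
      _ ≤ _ := ih

include hα hroot hre in
lemma light_cls {k j : ℕ} {u : V} (hj : j ≤ k - 1) (huT : u ∈ Tset α par j)
    (hlight : ¬ heavy α par (Tset α par j) u) : clsF α par k u = j := by
  have hnot : u ∉ Tset α par (j+1) := by
    intro hmem
    rw [show Tset α par (j+1) = nextT α par (Tset α par j) from rfl, nextT,
      Finset.mem_filter] at hmem
    obtain ⟨-, c₁, c₂, -, ⟨hc1, hp1, hh1⟩, -⟩ := hmem
    exact hlight (heavy_of_desc_subset (child_mem_desc (heavy_mem hα hh1) huT hp1) hh1)
  have h1 := cls_ge_of_mem hα hroot hre huT hj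
  have h2 := cls_lt_of_not_mem (k := k) hnot
  omega

lemma light_child {u v : V} {j : ℕ} (hvT : v ∈ Tset α par j)
    (hlight : ¬ heavy α par (Tset α par j) v) (hu : par u = v)
    (huT : u ∈ Tset α par j) : ¬ heavy α par (Tset α par j) u :=
  fun hh => hlight (heavy_of_desc_subset (child_mem_desc huT hvT hu) hh)

end CardBound

/-! ### label membership lemmas -/

section LabMem
variable {α : ℝ}

lemma lab_mem_below {k i : ℕ} {v : V} (h : clsF α par k v + 1 < i) :
    labF α par r k v ∈ belowStrict i := by
  rcases labF_cases (α := α) (par := par) (r := r) k v with ⟨hl, -⟩ | ⟨hl, -⟩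
  · exact ⟨clsF α par k v + 1, by omega, h, Or.inr (Or.inr hl)⟩
  · rcases hl with hl | hl
    · exact ⟨clsF α par k v + 1, by omega, h, Or.inl hl⟩
    · exact ⟨clsF α par k v + 1, by omega, h, Or.inr (Or.inl hl)⟩

lemma lab_mem_sigma {k : ℕ} (hk : 1 ≤ k) (v : V) : labF α par r k v ∈ SigmaK k := by
  have hc := cls_le (α := α) (par := par) k v
  rcases labF_cases (α := α) (par := par) (r := r) k v with ⟨hl, hne, -⟩ | ⟨hl, -⟩
  · exact ⟨clsF α par k v + 1, by omega, Or.inr ⟨by omega, hl⟩⟩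
  · rcases hl with hl | hl
    · exact ⟨clsF α par k v + 1, by omega, Or.inl ⟨by omega, Or.inl hl⟩⟩
    · exact ⟨clsF α par k v + 1, by omega, Or.inl ⟨by omega, Or.inr hl⟩⟩

end LabMem

end Stmt12

open Stmt12

/-- every finite rooted tree with `n ≥ 1` vertices in which every
vertex has exactly 0 or 2 children admits a labeling `λ : V → Σ_k` such that
(i) for every vertex `v` with children `u₁, u₂` the configuration
`(λ(v) : λ(u₁), λ(u₂))` is in `C_k`, and (ii) for every `1 ≤ i ≤ k` every
connected component of `λ⁻¹({a_i, b_i})` has at most `n^{1/k}` vertices. -/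
theorem stmt12 {V : Type*} [Fintype V] (k : ℕ) (hk : 1 ≤ k)
    (par : V → V) (r : V) (hroot : par r = r)
    (hnr : ∀ v : V, v ≠ r → par v ≠ v)
    (hreach : ∀ v : V, ∃ m : ℕ, par^[m] v = r)
    (hbin : ∀ v : V, {u | u ≠ v ∧ par u = v}.ncard = 0 ∨ {u | u ≠ v ∧ par u = v}.ncard = 2)
    (n : ℕ) (hn : n = Fintype.card V) (hn1 : 1 ≤ n) :
    ∃ lab : V → Lab,
      (∀ v : V, lab v ∈ SigmaK k) ∧
      (∀ v u₁ u₂ : V, u₁ ≠ u₂ → u₁ ≠ v → par u₁ = v → u₂ ≠ v → par u₂ = v →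
        (lab v, lab u₁, lab u₂) ∈ Ck k) ∧
      (∀ i, 1 ≤ i → i ≤ k →
        ∀ v ∈ lab ⁻¹' {Lab.a i, Lab.b i},
          (({u | Relation.ReflTransGen (adjOn par (lab ⁻¹' {Lab.a i, Lab.b i})) v u}).ncard : ℝ)
            ≤ (n : ℝ) ^ ((1 : ℝ) / (k : ℝ))) := by
  classical
  set α : ℝ := (n : ℝ) ^ ((1 : ℝ) / (k : ℝ)) with hαdef
  have hk0 : (k : ℝ) ≠ 0 := Nat.cast_ne_zero.2 (by omega)
  have hnpos : (0:ℝ) < (n:ℝ) := by exact_mod_cast hn1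
  have hαpos : 0 < α := Real.rpow_pos_of_pos hnpos _
  have hα0 : (0:ℝ) ≤ α := le_of_lt hαpos
  have hαk : α ^ k = (n : ℝ) := by
    rw [hαdef, ← Real.rpow_natCast ((n:ℝ) ^ ((1:ℝ)/(k:ℝ))) k,
      ← Real.rpow_mul (le_of_lt hnpos), one_div_mul_cancel hk0, Real.rpow_one]
  refine ⟨labF α par r k, fun v => lab_mem_sigma hk v, ?_, ?_⟩
  · -- condition (i)
    intro v u₁ u₂ hne hu₁v hp₁ hu₂v hp₂
    have hjk : clsF α par k v ≤ k - 1 := cls_le k v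
    have hvT : v ∈ Tset α par (clsF α par k v) := mem_cls hα0 hroot hreach k v
    have hpar : ∀ u, u ≠ v → par u = v → (Even (dep par r u) ↔ ¬ Even (dep par r v)) := by
      intro u hu hp
      rw [dep_child hα0 hroot hreach hu hp]
      exact Nat.even_add_one
    rcases labF_cases (α := α) (par := par) (r := r) k v with ⟨hl, hne', hheavy⟩ | ⟨hl, hd⟩
    · -- v is heavy: x label
      right
      refine ⟨clsF α par k v + 1, by omega, by omega, hl, ?_⟩
      have good : ∀ u, u ≠ v → par u = v →
          ¬ (u ∈ Tset α par (clsF α par k v) ∧ heavy α par (Tset α par (clsF α par k v)) u) →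
          labF α par r k u ∈ upTo (clsF α par k v + 1) := by
        intro u hu hp hbad
        by_cases huT : u ∈ Tset α par (clsF α par k v)
        · have hlight : ¬ heavy α par (Tset α par (clsF α par k v)) u := fun hh => hbad ⟨huT, hh⟩
          have hcls : clsF α par k u = clsF α par k v :=
            light_cls hα0 hroot hreach hjk huT hlight
          have hab : labF α par r k u = Lab.a (clsF α par k v + 1) ∨
              labF α par r k u = Lab.b (clsF α par k v + 1) := by
            rcases labF_cases (α := α) (par := par) (r := r) k u with ⟨-, -, hh⟩ | ⟨hl2, -⟩
            · rw [hcls] at hh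
              exact absurd hh hlight
            · rw [hcls] at hl2; exact hl2
          rcases hab with h | h
          · exact Or.inr (by rw [h]; exact Set.mem_insert _ _)
          · exact Or.inr (by rw [h]; exact Set.mem_insert_of_mem _ rfl)
        · have hcls : clsF α par k u < clsF α par k v := cls_lt_of_not_mem huT
          exact Or.inl (lab_mem_below (by omega))
      by_cases hbad2 : u₂ ∈ Tset α par (clsF α par k v) ∧
          heavy α par (Tset α par (clsF α par k v)) u₂
      · have hbad1 : ¬ (u₁ ∈ Tset α par (clsF α par k v) ∧
            heavy α par (Tset α par (clsF α par k v)) u₁) := by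
          intro hbad1
          have hvnext : v ∈ Tset α par (clsF α par k v + 1) := by
            rw [show Tset α par (clsF α par k v + 1) =
              nextT α par (Tset α par (clsF α par k v)) from rfl, nextT, Finset.mem_filter]
            exact ⟨hvT, u₁, u₂, hne, ⟨hu₁v, hp₁, hbad1.2⟩, ⟨hu₂v, hp₂, hbad2.2⟩⟩
          exact not_mem_cls_succ hα0 hroot hreach hne' hvnext
        exact Or.inr ⟨lab_mem_sigma hk u₂, good u₁ hu₁v hp₁ hbad1⟩
      · exact Or.inl ⟨lab_mem_sigma hk u₁, good u₂ hu₂v hp₂ hbad2⟩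
    · -- v gets an a/b label
      left
      have hnotxv : ¬ (clsF α par k v ≠ k - 1 ∧
          heavy α par (Tset α par (clsF α par k v)) v) := by
        rcases hd with hd | hd
        · intro hcon; exact hcon.1 hd
        · intro hcon; exact hd hcon.2
      have hlabv : labF α par r k v =
          (if Even (dep par r v) then Lab.a (clsF α par k v + 1)
            else Lab.b (clsF α par k v + 1)) := by
        rw [labF, if_neg hnotxv]
      have childlab : ∀ u, u ≠ v → par u = v →
          labF α par r k u ∈ belowStrict (clsF α par k v + 1) ∪
            {(if Even (dep par r v) then Lab.b (clsF α par k v + 1)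
              else Lab.a (clsF α par k v + 1))} := by
        intro u hu hp
        by_cases huT : u ∈ Tset α par (clsF α par k v)
        · have hcls : clsF α par k u = clsF α par k v := by
            rcases hd with hd | hd
            · have h1 := cls_ge_of_mem (k := k) hα0 hroot hreach huT (by omega)
              have h2 := cls_le (α := α) (par := par) k u
              omega
            · exact light_cls hα0 hroot hreach hjk huT (light_child hvT hd hp huT)
          have hnotx : ¬ (clsF α par k u ≠ k - 1 ∧
              heavy α par (Tset α par (clsF α par k u)) u) := by
            rcases hd with hd | hd
            · intro hcon; exact hcon.1 (by omega)
            · intro hcon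
              exact (light_child hvT hd hp huT) (by rw [hcls] at hcon; exact hcon.2)
          have hlabu : labF α par r k u =
              (if Even (dep par r u) then Lab.a (clsF α par k v + 1)
                else Lab.b (clsF α par k v + 1)) := by
            rw [labF, if_neg hnotx, hcls]
          have hflip := hpar u hu hp
          right
          simp only [Set.mem_singleton_iff]
          by_cases hev : Even (dep par r v)
          · rw [if_pos hev, hlabu, if_neg (by rw [hflip]; exact not_not_intro hev)]
          · rw [if_neg hev, hlabu, if_pos (hflip.2 hev)]
        · have hcls : clsF α par k u < clsF α par k v := cls_lt_of_not_mem huT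
          exact Or.inl (lab_mem_below (by omega))
      by_cases hev : Even (dep par r v)
      · refine ⟨clsF α par k v + 1, by omega, by omega, Or.inl ⟨by rw [hlabv, if_pos hev], ?_, ?_⟩⟩
        · have := childlab u₁ hu₁v hp₁; rwa [if_pos hev] at this
        · have := childlab u₂ hu₂v hp₂; rwa [if_pos hev] at this
      · refine ⟨clsF α par k v + 1, by omega, by omega, Or.inr ⟨by rw [hlabv, if_neg hev], ?_, ?_⟩⟩
        · have := childlab u₁ hu₁v hp₁; rwa [if_neg hev] at this
        · have := childlab u₂ hu₂v hp₂; rwa [if_neg hev] at this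
  · -- condition (ii)
    intro i hi1 hik v hv
    have hQv : labF α par r k v = Lab.a i ∨ labF α par r k v = Lab.b i := by
      simpa using hv
    obtain ⟨hieq, hdisjv⟩ := labF_ab_inv hQv
    have hTb : ((Tset α par (k-1)).card : ℝ) ≤ α := by
      have h1 := Tset_card_bound hα0 hroot hreach (k-1)
      rw [← hn] at h1
      have h2 : (n:ℝ) = α ^ (k-1) * α := by
        rw [← hαk, ← pow_succ]
        congr 1
        omega
      have h3 : (0:ℝ) < α ^ (k-1) := pow_pos hαpos _
      have h4 : ((Tset α par (k-1)).card : ℝ) * α ^ (k-1) ≤ α * α ^ (k-1) := by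
        rw [mul_comm α (α ^ (k-1))]; linarith
      exact le_of_mul_le_mul_right h4 h3
    have hQT : ∀ u, (labF α par r k u = Lab.a i ∨ labF α par r k u = Lab.b i) →
        u ∈ Tset α par (i-1) ∧ clsF α par k u = i - 1 := by
      intro u hQu
      obtain ⟨he, -⟩ := labF_ab_inv hQu
      have hce : clsF α par k u = i - 1 := by omega
      exact ⟨hce ▸ mem_cls hα0 hroot hreach k u, hce⟩
    have hcompP : ∀ u, Relation.ReflTransGen
        (adjOn par (labF α par r k ⁻¹' {Lab.a i, Lab.b i})) v u →
        ((labF α par r k u = Lab.a i ∨ labF α par r k u = Lab.b i) ∧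
          topF par r (fun w => labF α par r k w = Lab.a i ∨ labF α par r k w = Lab.b i) u =
          topF par r (fun w => labF α par r k w = Lab.a i ∨ labF α par r k w = Lab.b i) v) := by
      intro u hu
      induction hu with
      | refl => exact ⟨hQv, rfl⟩
      | @tail b c hab hstep ih =>
        obtain ⟨hb1, hb2, hb3, hb4⟩ := hstep
        have hQc : labF α par r k c = Lab.a i ∨ labF α par r k c = Lab.b i := by
          simpa using hb2
        refine ⟨hQc, ?_⟩
        rcases hb4 with h | h
        · rw [← top_step (Q := fun w => labF α par r k w = Lab.a i ∨ labF α par r k w = Lab.b i)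
            hroot hreach h hb3 (by simpa using hb1) hQc]
          exact ih.2
        · rw [top_step (Q := fun w => labF α par r k w = Lab.a i ∨ labF α par r k w = Lab.b i)
            hroot hreach h (Ne.symm hb3) hQc (by simpa using hb1)]
          exact ih.2
    by_cases hik' : i = k
    · -- top class: bound by the whole of Tset (k-1)
      have hie : i - 1 = k - 1 := by omega
      have hsub : {u | Relation.ReflTransGen
          (adjOn par (labF α par r k ⁻¹' {Lab.a i, Lab.b i})) v u} ⊆
          (↑(Tset α par (i-1)) : Set V) := by
        intro u hu
        exact Finset.mem_coe.2 (hQT u (hcompP u hu).1).1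
      have h5 : ({u | Relation.ReflTransGen
          (adjOn par (labF α par r k ⁻¹' {Lab.a i, Lab.b i})) v u}).ncard ≤
          (Tset α par (i-1)).card := by
        have := Set.ncard_le_ncard hsub (Set.toFinite _)
        rwa [Set.ncard_coe_finset] at this
      calc (({u | Relation.ReflTransGen
          (adjOn par (labF α par r k ⁻¹' {Lab.a i, Lab.b i})) v u}).ncard : ℝ)
          ≤ ((Tset α par (i-1)).card : ℝ) := by exact_mod_cast h5
        _ ≤ α := by rw [hie]; exact hTb
    · -- light class
      have hik2 : i - 1 ≠ k - 1 := by omega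
      have hQtop := top_Q (par := par) (r := r)
        (Q := fun w => labF α par r k w = Lab.a i ∨ labF α par r k w = Lab.b i) hQv
      have hclstop : clsF α par k (topF par r
          (fun w => labF α par r k w = Lab.a i ∨ labF α par r k w = Lab.b i) v) = i - 1 :=
        (hQT _ hQtop).2
      obtain ⟨hietop, hdisjtop⟩ := labF_ab_inv hQtop
      have hlighttop : ¬ heavy α par (Tset α par (i-1)) (topF par r
          (fun w => labF α par r k w = Lab.a i ∨ labF α par r k w = Lab.b i) v) := by
        rcases hdisjtop with h | h
        · exact absurd (hclstop ▸ h) hik2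
        · rwa [hclstop] at h
      have hcardD : ((desc par (Tset α par (i-1)) (topF par r
          (fun w => labF α par r k w = Lab.a i ∨ labF α par r k w = Lab.b i) v)).card : ℝ) ≤ α :=
        not_lt.1 hlighttop
      have hsub : {u | Relation.ReflTransGen
          (adjOn par (labF α par r k ⁻¹' {Lab.a i, Lab.b i})) v u} ⊆
          (↑(desc par (Tset α par (i-1)) (topF par r
            (fun w => labF α par r k w = Lab.a i ∨ labF α par r k w = Lab.b i) v)) : Set V) := by
        intro u hu
        obtain ⟨hQu, htu⟩ := hcompP u hu
        refine Finset.mem_coe.2 ?_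
        rw [← htu]
        refine mem_desc.2 ⟨tnF par r
          (fun w => labF α par r k w = Lab.a i ∨ labF α par r k w = Lab.b i) u, rfl, ?_⟩
        intro j hj
        have hQj := top_chain (par := par) (r := r)
          (Q := fun w => labF α par r k w = Lab.a i ∨ labF α par r k w = Lab.b i) hQu j hj
        exact (hQT _ hQj).1
      have h5 : ({u | Relation.ReflTransGen
          (adjOn par (labF α par r k ⁻¹' {Lab.a i, Lab.b i})) v u}).ncard ≤
          (desc par (Tset α par (i-1)) (topF par r
            (fun w => labF α par r k w = Lab.a i ∨ labF α par r k w = Lab.b i) v)).card := by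
        have := Set.ncard_le_ncard hsub (Set.toFinite _)
        rwa [Set.ncard_coe_finset] at this
      calc (({u | Relation.ReflTransGen
          (adjOn par (labF α par r k ⁻¹' {Lab.a i, Lab.b i})) v u}).ncard : ℝ)
          ≤ _ := by exact_mod_cast h5
        _ ≤ α := hcardD
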